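/- arXiv:1805.12335 — 3 statements merged into one kernel-verified Lean document; each statement's English description precedes it below -/
import Mathlib

section
/- For every γ ∈ GL_r(F_∞) there exists a constant c₁ > 0 such that for every ω ∈ Ω^r: h(ω) ≤ c₁·|j(γ,ω)|·|ω|^{−1} ≤ 1. (One may take c₁ = |x|^{−1}|ξ| where x is an entry of maximal absolute value in the last row of γ.) -/
/-!
Normalising the last row of `γ` by an entry `x` of largest absolute value gives a unimodular
form `ℓ` with coefficients in `F_∞` and `ℓ(ω) = x⁻¹ ξ j(γ,ω)`. Hence
`h(ω) ≤ |ω|⁻¹ |ℓ(ω)| = c₁ |j(γ,ω)| |ω|⁻¹` with `c₁ = |x|⁻¹ |ξ|`, and the ultrametric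
inequality gives `|ℓ(ω)| ≤ |ω|` because all coefficients of `ℓ` have absolute value `≤ 1`.
-/
noncomputable section

namespace Paper

/-- The sup-norm `|ω| = max_i |ω_i|` of a vector. -/
noncomputable def supNorm {K : Type*} [NormedField K] {m : ℕ} (ω : Fin m → K) : ℝ :=
  ⨆ i, ‖ω i‖

/-- A linear form with coefficients `ℓ i` in `F_∞` is unimodular if its largest
coefficient has absolute value `1`. -/
def Unimodular {K : Type*} [NormedField K] (Finf : Subfield K) {m : ℕ} (ℓ : Fin m → K) : Prop :=
  (∀ i, ℓ i ∈ Finf) ∧ supNorm ℓ = 1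

/-- `h(ω) = |ω|⁻¹ · inf {|ℓ(ω)| : ℓ a unimodular F_∞-linear form}`. -/
noncomputable def hOm {K : Type*} [NormedField K] (Finf : Subfield K) {m : ℕ}
    (ω : Fin m → K) : ℝ :=
  (supNorm ω)⁻¹ *
    sInf {x : ℝ | ∃ ℓ : Fin m → K, Unimodular Finf ℓ ∧ x = ‖∑ i, ℓ i * ω i‖}

/-- The Drinfeld period domain `Ω^{m+1}`: vectors with `F_∞`-linearly independent entries
and last entry `ξ`. -/
def Omega {K : Type*} [NormedField K] (Finf : Subfield K) (ξ : K) (m : ℕ) :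
    Set (Fin (m + 1) → K) :=
  {ω | (∀ c : Fin (m + 1) → K, (∀ i, c i ∈ Finf) → ∑ i, c i * ω i = 0 → ∀ i, c i = 0) ∧
    ω (Fin.last m) = ξ}

/-- `Ω^{m+1}_n = {ω ∈ Ω^{m+1} : h(ω) ≥ |π|^n}` where `|π| = q⁻¹`. -/
def OmegaN {K : Type*} [NormedField K] (Finf : Subfield K) (ξ : K) (q : ℕ) (m n : ℕ) :
    Set (Fin (m + 1) → K) :=
  {ω | ω ∈ Omega Finf ξ m ∧ ((q : ℝ))⁻¹ ^ n ≤ hOm Finf ω}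

/-- The automorphy factor `j(γ,ω) = ξ⁻¹·(last entry of γω)`. -/
noncomputable def jmap {K : Type*} [NormedField K] (ξ : K) {m : ℕ}
    (γ : Matrix (Fin (m + 1)) (Fin (m + 1)) K) (ω : Fin (m + 1) → K) : K :=
  ξ⁻¹ * (γ.mulVec ω) (Fin.last m)

/-- The action `γ(ω) = j(γ,ω)⁻¹·γω` of `GL_{m+1}(F_∞)` on `Ω^{m+1}`. -/
noncomputable def gact {K : Type*} [NormedField K] (ξ : K) {m : ℕ}
    (γ : Matrix (Fin (m + 1)) (Fin (m + 1)) K) (ω : Fin (m + 1) → K) : Fin (m + 1) → K :=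
  fun i => (jmap ξ γ ω)⁻¹ * (γ.mulVec ω) i

section SupNorm

variable {K : Type*} [NormedField K] {m : ℕ}

theorem norm_le_supNorm (ω : Fin m → K) (i : Fin m) : ‖ω i‖ ≤ supNorm ω :=
  le_ciSup (f := fun i => ‖ω i‖) (Set.finite_range _).bddAbove i

theorem supNorm_nonneg (ω : Fin m → K) : 0 ≤ supNorm ω :=
  Real.iSup_nonneg fun _ => norm_nonneg _

theorem supNorm_pos_of_mem_Omega {Finf : Subfield K} {ξ : K} (hξ : ξ ≠ 0) {n : ℕ}
    {ω : Fin (n + 1) → K} (hω : ω ∈ Omega Finf ξ n) : 0 < supNorm ω :=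
  (norm_pos_iff.mpr hξ).trans_le (hω.2 ▸ norm_le_supNorm ω (Fin.last n))

theorem norm_sum_mul_le_supNorm [IsUltrametricDist K] {ℓ : Fin m → K} (hℓ : ∀ i, ‖ℓ i‖ ≤ 1)
    (ω : Fin m → K) : ‖∑ i, ℓ i * ω i‖ ≤ supNorm ω := by
  refine IsUltrametricDist.norm_sum_le_of_forall_le_of_nonneg (supNorm_nonneg ω) fun i _ => ?_
  calc ‖ℓ i * ω i‖ = ‖ℓ i‖ * ‖ω i‖ := norm_mul _ _
    _ ≤ 1 * supNorm ω := mul_le_mul (hℓ i) (norm_le_supNorm ω i) (norm_nonneg _) zero_le_one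
    _ = supNorm ω := one_mul _

end SupNorm

section Unimodular

variable {K : Type*} [NormedField K] {Finf : Subfield K} {m : ℕ}

theorem hOm_le_of_unimodular {ℓ : Fin m → K} (hℓ : Unimodular Finf ℓ) (ω : Fin m → K) :
    hOm Finf ω ≤ (supNorm ω)⁻¹ * ‖∑ i, ℓ i * ω i‖ := by
  refine mul_le_mul_of_nonneg_left (csInf_le ?_ ⟨ℓ, hℓ, rfl⟩) (inv_nonneg.mpr (supNorm_nonneg ω))
  exact ⟨0, fun _ ⟨_, _, hy⟩ => hy ▸ norm_nonneg _⟩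

theorem norm_inv_mul_le_one_of_isMax {v : Fin m → K} {i₀ : Fin m}
    (hmax : ∀ j, ‖v j‖ ≤ ‖v i₀‖) (j : Fin m) : ‖(v i₀)⁻¹ * v j‖ ≤ 1 := by
  rw [norm_mul, norm_inv]
  rcases (norm_nonneg (v i₀)).eq_or_lt with h0 | hpos
  · simp [← h0]
  · exact (inv_mul_le_one₀ hpos).mpr (hmax j)

theorem unimodular_inv_mul_of_isMax {v : Fin m → K} (hv : ∀ i, v i ∈ Finf) {i₀ : Fin m}
    (hmax : ∀ j, ‖v j‖ ≤ ‖v i₀‖) (hi₀ : v i₀ ≠ 0) :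
    Unimodular Finf fun j => (v i₀)⁻¹ * v j := by
  refine ⟨fun j => Finf.mul_mem (Finf.inv_mem (hv i₀)) (hv j), le_antisymm ?_ ?_⟩
  · exact Real.iSup_le (norm_inv_mul_le_one_of_isMax hmax) zero_le_one
  · calc (1 : ℝ) = ‖(v i₀)⁻¹ * v i₀‖ := by rw [inv_mul_cancel₀ hi₀, norm_one]
      _ ≤ _ := norm_le_supNorm (fun j => (v i₀)⁻¹ * v j) i₀

end Unimodular

theorem exists_row_entry_ne_zero_isMax_norm_of_det_ne_zero {K : Type*} [NormedField K] {n : ℕ}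
    {γ : Matrix (Fin n) (Fin n) K} (hγ : γ.det ≠ 0) (r : Fin n) :
    ∃ i, γ r i ≠ 0 ∧ ∀ j, ‖γ r j‖ ≤ ‖γ r i‖ := by
  have : Nonempty (Fin n) := ⟨r⟩
  obtain ⟨i, hi⟩ := Finite.exists_max fun j => ‖γ r j‖
  refine ⟨i, fun h0 => hγ (γ.det_eq_zero_of_row_eq_zero r fun j => ?_), hi⟩
  simpa [h0] using hi j

theorem mul_jmap {K : Type*} [NormedField K] {ξ : K} (hξ : ξ ≠ 0) {m : ℕ}
    (γ : Matrix (Fin (m + 1)) (Fin (m + 1)) K) (ω : Fin (m + 1) → K) :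
    ξ * jmap ξ γ ω = ∑ i, γ (Fin.last m) i * ω i := by
  rw [jmap, mul_inv_cancel_left₀ hξ]
  rfl

theorem statement5_general
    {K : Type*} [NormedField K] [IsUltrametricDist K]
    (Finf : Subfield K)
    (ξ : K) (hξ : ξ ≠ 0)
    (m : ℕ) (γ : Matrix (Fin (m + 1)) (Fin (m + 1)) K)
    (hγF : ∀ i j, γ i j ∈ Finf) (hγdet : γ.det ≠ 0) :
    ∃ c₁ : ℝ, 0 < c₁ ∧ ∀ ω ∈ Omega Finf ξ m,
      hOm Finf ω ≤ c₁ * ‖jmap ξ γ ω‖ * (supNorm ω)⁻¹ ∧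
      c₁ * ‖jmap ξ γ ω‖ * (supNorm ω)⁻¹ ≤ 1 := by
  obtain ⟨i₀, hx, hmax⟩ := exists_row_entry_ne_zero_isMax_norm_of_det_ne_zero hγdet (Fin.last m)
  set x := γ (Fin.last m) i₀
  set ℓ : Fin (m + 1) → K := fun j => x⁻¹ * γ (Fin.last m) j
  refine ⟨‖x‖⁻¹ * ‖ξ‖, by positivity, fun ω hω => ?_⟩
  have hℓω : ‖∑ i, ℓ i * ω i‖ = ‖x‖⁻¹ * ‖ξ‖ * ‖jmap ξ γ ω‖ := by
    simp only [ℓ, mul_assoc, ← Finset.mul_sum, ← mul_jmap hξ, norm_mul, norm_inv]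
  rw [← hℓω, mul_comm]
  constructor
  · exact hOm_le_of_unimodular (unimodular_inv_mul_of_isMax (hγF _) hmax hx) ω
  · rw [inv_mul_le_one₀ (supNorm_pos_of_mem_Omega hξ hω)]
    exact norm_sum_mul_le_supNorm (norm_inv_mul_le_one_of_isMax hmax) ω

/-- For every `γ ∈ GL_r(F_∞)` (entries in `F_∞`, invertible) there exists
`c₁ > 0` such that for every `ω ∈ Ω^r`:  `h(ω) ≤ c₁·|j(γ,ω)|·|ω|⁻¹ ≤ 1`. -/
theorem statement5
    (p k q : ℕ) (hp : p.Prime) (hqpk : q = p ^ k) (hk : 0 < k)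
    {K : Type*} [NormedField K] [CompleteSpace K] [IsAlgClosed K] [IsUltrametricDist K]
    [CharP K p]
    (t : K) (ht : ‖t‖ = (q : ℝ))
    (Fq : Subfield K) (hFq : (Fq : Set K) = {x : K | x ^ q = x})
    (F : Subfield K) (hF : F = Subfield.closure ((Fq : Set K) ∪ {t}))
    (A : Subring K) (hA : A = Subring.closure ((Fq : Set K) ∪ {t}))
    (Finf : Subfield K) (hFinf : (Finf : Set K) = closure (F : Set K))
    (ξ : K) (hξ : ξ ≠ 0)
    (m : ℕ) (γ : Matrix (Fin (m + 1)) (Fin (m + 1)) K)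
    (hγF : ∀ i j, γ i j ∈ Finf) (hγdet : γ.det ≠ 0) :
    ∃ c₁ : ℝ, 0 < c₁ ∧ ∀ ω ∈ Omega Finf ξ m,
      hOm Finf ω ≤ c₁ * ‖jmap ξ γ ω‖ * (supNorm ω)⁻¹ ∧
      c₁ * ‖jmap ξ γ ω‖ * (supNorm ω)⁻¹ ≤ 1 :=
  statement5_general Finf ξ hξ m γ hγF hγdet

end Paper
end
end

section
/- For every γ ∈ GL_r(F_∞) there exists a constant c₂ > 0 such that for every ω ∈ Ω^r: |γ(ω)| ≤ c₂·h(ω)^{−1}. -/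
noncomputable section

namespace Paper

/-
The unit ball of `F_∞ = closure 𝔽_q(t)` is compact: for a quotient of polynomials `x ∈ 𝔽_q(t)`
with `|x| ≤ 1`, the Euclidean quotient is a constant `a ∈ 𝔽_q` and `|x - a| ≤ |t|⁻¹`; iterating on
`t (x - a)` gives a digit expansion `∑_{i<n} aᵢ t⁻ⁱ` within `|t|⁻ⁿ` of `x`, and there are only
finitely many of those. Hence the unimodular forms make up a compact set, and since the coordinates
of `ω` are `F_∞`-linearly independent, `|ω| h(ω) = inf_ℓ |ℓ(ω)|` is attained and positive.
Applied to the last row `ℓ` of `γ` (nonzero as `det γ ≠ 0`) this gives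
`|j(γ,ω)| ≥ |ξ|⁻¹ |ℓ| |ω| h(ω)`, while `|γω| ≤ ‖γ‖ |ω|`; so `|γ(ω)| = |γω| / |j(γ,ω)| ≤ |ξ| ‖γ‖ |ℓ|⁻¹ h(ω)⁻¹`.
-/

open Polynomial Metric Matrix

section Norms

variable {K : Type*} [NormedField K]

theorem supNorm_eq_norm {m : ℕ} (ω : Fin m → K) : supNorm ω = ‖ω‖ := by
  refine le_antisymm (Real.iSup_le (norm_le_pi_norm ω) (norm_nonneg _)) ?_
  exact (pi_norm_le_iff_of_nonneg (Real.iSup_nonneg fun _ => norm_nonneg _)).2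
    fun i => le_ciSup (f := fun i => ‖ω i‖) (Finite.bddAbove_range _) i

theorem norm_eq_one_of_mem_finite {k : Subfield K} [Finite k] {a : K} (ha : a ∈ k)
    (h0 : a ≠ 0) : ‖a‖ = 1 := by
  let u : kˣ := Units.mk0 ⟨a, ha⟩ (by simpa [← Subtype.val_inj] using h0)
  exact (((k.subtype : k →* K).comp (Units.coeHom k)).isOfFinOrder
    (isOfFinOrder_of_finite u)).norm_eq_one

theorem finite_setOf_pow_eq_self {q : ℕ} (hq : 1 < q) : {x : K | x ^ q = x}.Finite := by
  refine (finite_setOfPred_isRoot (FiniteField.X_pow_card_sub_X_ne_zero K hq)).subset fun x hx => ?_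
  simp_all [IsRoot]

theorem norm_le_one_of_mem {k : Subfield K} (hk : ∀ a ∈ k, a ≠ 0 → ‖a‖ = 1) {a : K}
    (ha : a ∈ k) : ‖a‖ ≤ 1 := by
  rcases eq_or_ne a 0 with rfl | h0
  · simp
  · exact (hk a ha h0).le

end Norms

theorem exists_eq_div_aeval {K : Type*} [Field K] {k : Subfield K} {t x : K}
    (hx : x ∈ Subfield.closure ((k : Set K) ∪ {t})) :
    ∃ f g : k[X], x = aeval t f / aeval t g := by
  rw [← Subtype.range_coe (s := (k : Set K))] at hx
  rw [← IntermediateField.mem_adjoin_simple_iff, ← IntermediateField.mem_toSubfield,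
    IntermediateField.adjoin_toSubfield]
  exact hx

/-- The sums `∑_{i<n} aᵢ t⁻ⁱ` with digits `aᵢ ∈ D`. -/
def finiteExpansions {K : Type*} [DivisionRing K] (D : Set K) (t : K) : ℕ → Set K
  | 0 => {0}
  | n + 1 => Set.image2 (fun a s => a + t⁻¹ * s) D (finiteExpansions D t n)

theorem finite_finiteExpansions {K : Type*} [DivisionRing K] {D : Set K} (hD : D.Finite) (t : K)
    (n : ℕ) : (finiteExpansions D t n).Finite := by
  induction n with
  | zero => exact Set.finite_singleton 0
  | succ n ih => exact hD.image2 _ ih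

section Expansion

open IsUltrametricDist

variable {K : Type*} [NormedField K] [IsUltrametricDist K] {k : Subfield K}
  (hk : ∀ a ∈ k, a ≠ 0 → ‖a‖ = 1) {t : K} (ht : 1 < ‖t‖)
include hk ht

theorem norm_aeval_eq {f : k[X]} (hf : f ≠ 0) : ‖aeval t f‖ = ‖t‖ ^ f.natDegree := by
  set n := f.natDegree
  have hlead : ‖(f.coeff n : K) * t ^ n‖ = ‖t‖ ^ n := by
    rw [norm_mul, norm_pow, hk _ (f.coeff n).2 (by simpa [n] using hf), one_mul]
  have hlower : ‖∑ i ∈ Finset.range n, (f.coeff i : K) * t ^ i‖ < ‖t‖ ^ n := by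
    rcases (Finset.range n).eq_empty_or_nonempty with hn | hn
    · simp only [hn, Finset.sum_empty, norm_zero]
      positivity
    obtain ⟨i, hi, hle⟩ := exists_norm_finsetSum_le_of_nonempty hn fun i => (f.coeff i : K) * t ^ i
    refine hle.trans_lt ?_
    rw [norm_mul, norm_pow]
    calc ‖(f.coeff i : K)‖ * ‖t‖ ^ i ≤ 1 * ‖t‖ ^ i := by
          gcongr
          exact norm_le_one_of_mem hk (f.coeff i).2
      _ < ‖t‖ ^ n := by rw [one_mul]; exact pow_lt_pow_right₀ ht (Finset.mem_range.1 hi)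
  rw [aeval_eq_sum_range, Finset.sum_range_succ]
  change ‖∑ i ∈ Finset.range n, (f.coeff i : K) * t ^ i + (f.coeff n : K) * t ^ n‖ = _
  rw [norm_add_eq_max_of_norm_ne_norm (hlead ▸ hlower.ne), hlead, max_eq_right hlower.le]

theorem norm_aeval_mul_le_of_degree_lt {r g : k[X]} (h : r.degree < g.degree) :
    ‖aeval t r‖ * ‖t‖ ≤ ‖aeval t g‖ := by
  rcases eq_or_ne r 0 with rfl | hr
  · simp
  have hg : g ≠ 0 := by rintro rfl; simp at h
  rw [norm_aeval_eq hk ht hr, norm_aeval_eq hk ht hg, ← pow_succ]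
  exact pow_le_pow_right₀ ht.le (natDegree_lt_natDegree hr h)

theorem aeval_mem_of_norm_le_one {f : k[X]} (h : ‖aeval t f‖ ≤ 1) : aeval t f ∈ k := by
  rcases eq_or_ne f 0 with rfl | hf
  · simp [k.zero_mem]
  have hdeg : f.natDegree = 0 := by
    by_contra hne
    rw [norm_aeval_eq hk ht hf] at h
    exact (one_lt_pow₀ ht hne).not_ge h
  rw [eq_C_of_natDegree_eq_zero hdeg, aeval_C]
  exact (f.coeff 0).2

theorem exists_mem_norm_sub_le {x : K} (hx : x ∈ Subfield.closure ((k : Set K) ∪ {t}))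
    (hx1 : ‖x‖ ≤ 1) : ∃ a ∈ k, ‖x - a‖ ≤ ‖t‖⁻¹ := by
  obtain ⟨f, g, rfl⟩ := exists_eq_div_aeval hx
  rcases eq_or_ne g 0 with rfl | hg
  · exact ⟨0, k.zero_mem, by simp⟩
  have hg0 : aeval t g ≠ 0 := by
    rw [← norm_pos_iff, norm_aeval_eq hk ht hg]
    exact pow_pos (by linarith) _
  have hsplit : aeval t f / aeval t g = aeval t (f / g) + aeval t (f % g) / aeval t g := by
    conv_lhs => rw [← EuclideanDomain.div_add_mod f g]
    rw [map_add, map_mul, add_div, mul_div_cancel_left₀ _ hg0]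
  have hrem : ‖aeval t (f % g) / aeval t g‖ ≤ ‖t‖⁻¹ := by
    rw [norm_div, div_le_iff₀ (norm_pos_iff.2 hg0), ← div_eq_inv_mul, le_div_iff₀ (by linarith)]
    exact norm_aeval_mul_le_of_degree_lt hk ht (degree_mod_lt f hg)
  have hquot : ‖aeval t (f / g)‖ ≤ 1 := by
    rw [← add_sub_cancel_right (aeval t (f / g)) (aeval t (f % g) / aeval t g), ← hsplit,
      sub_eq_add_neg]
    refine (norm_add_le_max _ _).trans (max_le hx1 ?_)
    rw [norm_neg]
    exact hrem.trans (inv_le_one_of_one_le₀ ht.le)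
  exact ⟨_, aeval_mem_of_norm_le_one hk ht hquot, by rwa [hsplit, add_sub_cancel_left]⟩

theorem exists_mem_finiteExpansions_norm_sub_le (n : ℕ) {x : K}
    (hx : x ∈ Subfield.closure ((k : Set K) ∪ {t})) (hx1 : ‖x‖ ≤ 1) :
    ∃ s ∈ finiteExpansions k t n, ‖x - s‖ ≤ ‖t‖⁻¹ ^ n := by
  induction n generalizing x with
  | zero => exact ⟨0, rfl, by simpa using hx1⟩
  | succ n ih =>
    have ht0 : t ≠ 0 := norm_pos_iff.1 (by linarith)
    obtain ⟨a, ha, hxa⟩ := exists_mem_norm_sub_le hk ht hx hx1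
    have hy : t * (x - a) ∈ Subfield.closure ((k : Set K) ∪ {t}) :=
      mul_mem (Subfield.subset_closure (Or.inr rfl))
        (sub_mem hx (Subfield.subset_closure (Or.inl ha)))
    have hy1 : ‖t * (x - a)‖ ≤ 1 := by
      rw [norm_mul]
      calc ‖t‖ * ‖x - a‖ ≤ ‖t‖ * ‖t‖⁻¹ := by gcongr
        _ = 1 := mul_inv_cancel₀ (norm_ne_zero_iff.2 ht0)
    obtain ⟨s, hs, hys⟩ := ih hy hy1
    refine ⟨a + t⁻¹ * s, Set.mem_image2_of_mem ha hs, ?_⟩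
    have : x - (a + t⁻¹ * s) = t⁻¹ * (t * (x - a) - s) := by field_simp; ring
    rw [this, norm_mul, norm_inv, pow_succ']
    gcongr

omit hk

theorem totallyBounded_closure_inter_closedBall [Finite k] :
    TotallyBounded ((Subfield.closure ((k : Set K) ∪ {t}) : Set K) ∩ closedBall 0 1) := by
  refine Metric.totallyBounded_iff.2 fun ε hε => ?_
  obtain ⟨n, hn⟩ := exists_pow_lt_of_lt_one hε (inv_lt_one_of_one_lt₀ ht)
  refine ⟨finiteExpansions k t n, finite_finiteExpansions (Set.toFinite _) t n, ?_⟩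
  rintro x ⟨hx, hx1⟩
  obtain ⟨s, hs, hxs⟩ := exists_mem_finiteExpansions_norm_sub_le
    (fun a ha h0 => norm_eq_one_of_mem_finite ha h0) ht n hx (mem_closedBall_zero_iff.1 hx1)
  exact Set.mem_biUnion hs (mem_ball_iff_norm.2 (hxs.trans_lt hn))

theorem isCompact_closure_inter_closedBall [CompleteSpace K] [Finite k] :
    IsCompact (closure (Subfield.closure ((k : Set K) ∪ {t}) : Set K) ∩ closedBall 0 1) := by
  refine ((totallyBounded_closure_inter_closedBall (k := k) ht).closure.subset ?_)
    |>.isCompact_of_isClosed (isClosed_closure.inter isClosed_closedBall)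
  rw [Set.inter_comm, Set.inter_comm _ (closedBall _ _)]
  exact (isOpen_closedBall 0 one_ne_zero).inter_closure

end Expansion

section Unimodular

variable {K : Type*} [NormedField K] {Finf : Subfield K} {m : ℕ}

def minUnimodular (Finf : Subfield K) (ω : Fin m → K) : ℝ :=
  sInf {x : ℝ | ∃ ℓ : Fin m → K, Unimodular Finf ℓ ∧ x = ‖∑ i, ℓ i * ω i‖}

theorem norm_mul_hOm {ω : Fin m → K} (hω : ω ≠ 0) : ‖ω‖ * hOm Finf ω = minUnimodular Finf ω := by
  rw [hOm, supNorm_eq_norm, ← mul_assoc, mul_inv_cancel₀ (norm_ne_zero_iff.2 hω), one_mul]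
  rfl

theorem minUnimodular_le {ℓ ω : Fin m → K} (hℓ : Unimodular Finf ℓ) :
    minUnimodular Finf ω ≤ ‖∑ i, ℓ i * ω i‖ :=
  csInf_le ⟨0, by rintro _ ⟨_, _, rfl⟩; exact norm_nonneg _⟩ ⟨ℓ, hℓ, rfl⟩

theorem norm_mul_minUnimodular_le {ℓ ω : Fin m → K} (hℓ : ∀ i, ℓ i ∈ Finf) :
    ‖ℓ‖ * minUnimodular Finf ω ≤ ‖∑ i, ℓ i * ω i‖ := by
  rcases eq_or_ne ℓ 0 with rfl | hℓ0
  · simp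
  obtain ⟨i₀, -, hi₀⟩ := Finset.exists_max_image Finset.univ (fun i => ‖ℓ i‖)
    (Finset.univ_nonempty_iff.2 ⟨(Function.ne_iff.1 hℓ0).choose⟩)
  have hnorm : ‖ℓ‖ = ‖ℓ i₀‖ :=
    le_antisymm ((pi_norm_le_iff_of_nonneg (norm_nonneg _)).2 fun i => hi₀ i (Finset.mem_univ i))
      (norm_le_pi_norm ℓ i₀)
  have hunim : Unimodular Finf fun i => (ℓ i₀)⁻¹ * ℓ i := by
    refine ⟨fun i => mul_mem (inv_mem (hℓ i₀)) (hℓ i), ?_⟩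
    rw [supNorm_eq_norm, show (fun i => (ℓ i₀)⁻¹ * ℓ i) = (ℓ i₀)⁻¹ • ℓ from rfl, norm_smul,
      norm_inv, ← hnorm, inv_mul_cancel₀ (norm_ne_zero_iff.2 hℓ0)]
  have hle := minUnimodular_le (ω := ω) hunim
  simp only [mul_assoc, ← Finset.mul_sum, norm_mul, norm_inv] at hle
  rw [hnorm]
  exact (le_inv_mul_iff₀ (hnorm ▸ norm_pos_iff.2 hℓ0)).1 hle

theorem minUnimodular_pos {ω : Fin (m + 1) → K}
    (hball : IsCompact ((Finf : Set K) ∩ closedBall 0 1))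
    (hind : ∀ c : Fin (m + 1) → K, (∀ i, c i ∈ Finf) → ∑ i, c i * ω i = 0 → ∀ i, c i = 0) :
    0 < minUnimodular Finf ω := by
  set S := {ℓ : Fin (m + 1) → K | Unimodular Finf ℓ}
  have hS : S = (Set.univ.pi fun _ => (Finf : Set K) ∩ closedBall 0 1) ∩ sphere 0 1 := by
    ext ℓ
    simp only [S, Unimodular, supNorm_eq_norm, Set.mem_ofPred_eq, Set.mem_inter_iff,
      Set.mem_univ_pi, mem_closedBall_zero_iff, mem_sphere_zero_iff_norm, SetLike.mem_coe]
    exact ⟨fun h => ⟨fun i => ⟨h.1 i, h.2 ▸ norm_le_pi_norm ℓ i⟩, h.2⟩,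
      fun h => ⟨fun i => (h.1 i).1, h.2⟩⟩
  have hScompact : IsCompact S :=
    hS ▸ (isCompact_univ_pi fun _ => hball).inter_right isClosed_sphere
  have hSne : S.Nonempty := ⟨fun _ => 1, fun _ => Finf.one_mem, by simp [supNorm_eq_norm]⟩
  have hcont : Continuous fun ℓ : Fin (m + 1) → K => ‖∑ i, ℓ i * ω i‖ := by fun_prop
  have himage : minUnimodular Finf ω = sInf ((fun ℓ => ‖∑ i, ℓ i * ω i‖) '' S) := by
    simp only [minUnimodular, Set.image, eq_comm]; rfl
  obtain ⟨ℓ, hℓ, hmin⟩ := (hScompact.image hcont).sInf_mem (hSne.image _)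
  rw [himage, ← hmin, norm_pos_iff]
  intro h0
  have hℓ0 : ℓ = 0 := funext (hind ℓ hℓ.1 h0)
  have := hℓ.2
  simp [hℓ0, supNorm_eq_norm] at this

theorem supNorm_gact_le {ξ : K} {γ : Matrix (Fin (m + 1)) (Fin (m + 1)) K}
    {ω : Fin (m + 1) → K} {C : ℝ} (hC : ‖γ *ᵥ ω‖ ≤ C * ‖ω‖)
    (hγ : ∀ j, γ (Fin.last m) j ∈ Finf) (hrow : γ (Fin.last m) ≠ 0) (hξ : ξ ≠ 0)
    (hω : ω (Fin.last m) = ξ) (hpos : 0 < minUnimodular Finf ω) :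
    supNorm (gact ξ γ ω) ≤ ‖ξ‖ * C / ‖γ (Fin.last m)‖ * (hOm Finf ω)⁻¹ := by
  have hω0 : ω ≠ 0 := fun h => hξ (hω ▸ congr_fun h _)
  have hlast : ‖γ (Fin.last m)‖ * (‖ω‖ * hOm Finf ω) ≤ ‖(γ *ᵥ ω) (Fin.last m)‖ :=
    norm_mul_hOm hω0 ▸ norm_mul_minUnimodular_le hγ
  have hden : 0 < ‖γ (Fin.last m)‖ * (‖ω‖ * hOm Finf ω) := by
    rw [norm_mul_hOm hω0]
    exact mul_pos (norm_pos_iff.2 hrow) hpos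
  calc supNorm (gact ξ γ ω) = ‖ξ‖ * ‖γ *ᵥ ω‖ / ‖(γ *ᵥ ω) (Fin.last m)‖ := by
        rw [supNorm_eq_norm, show gact ξ γ ω = (jmap ξ γ ω)⁻¹ • γ *ᵥ ω from rfl, norm_smul,
          jmap, norm_inv, norm_mul, norm_inv, mul_inv, inv_inv, div_eq_mul_inv]
        ring
    _ ≤ ‖ξ‖ * (C * ‖ω‖) / (‖γ (Fin.last m)‖ * (‖ω‖ * hOm Finf ω)) := by
        have := (norm_nonneg _).trans hC
        gcongr
    _ = ‖ξ‖ * C / ‖γ (Fin.last m)‖ * (hOm Finf ω)⁻¹ := by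
        field_simp [norm_ne_zero_iff.2 hω0]

end Unimodular

theorem statement6_general
    (p k q : ℕ) (hp : p.Prime) (hqpk : q = p ^ k) (hk : 0 < k)
    {K : Type*} [NormedField K] [CompleteSpace K] [IsUltrametricDist K]
    (t : K) (ht : ‖t‖ = (q : ℝ))
    (Fq : Subfield K) (hFq : (Fq : Set K) = {x : K | x ^ q = x})
    (F : Subfield K) (hF : F = Subfield.closure ((Fq : Set K) ∪ {t}))
    (Finf : Subfield K) (hFinf : (Finf : Set K) = closure (F : Set K))
    (ξ : K) (hξ : ξ ≠ 0)
    (m : ℕ) (γ : Matrix (Fin (m + 1)) (Fin (m + 1)) K)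
    (hγF : ∀ i j, γ i j ∈ Finf) (hγdet : γ.det ≠ 0) :
    ∃ c₂ : ℝ, 0 < c₂ ∧ ∀ ω ∈ Omega Finf ξ m,
      supNorm (gact ξ γ ω) ≤ c₂ * (hOm Finf ω)⁻¹ := by
  have hq : 1 < q := hqpk ▸ Nat.one_lt_pow hk.ne' hp.one_lt
  have : Finite Fq := (hFq ▸ finite_setOf_pow_eq_self hq : (Fq : Set K).Finite).to_subtype
  have hball : IsCompact ((Finf : Set K) ∩ closedBall 0 1) := by
    rw [hFinf, hF]
    exact isCompact_closure_inter_closedBall (by rw [ht]; exact_mod_cast hq)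
  have hrow : γ (Fin.last m) ≠ 0 := fun h => hγdet (det_eq_zero_of_row_eq_zero _ (congr_fun h))
  let _ := Matrix.linftyOpNormedAddCommGroup (m := Fin (m + 1)) (n := Fin (m + 1)) (α := K)
  have hγ : 0 < ‖γ‖ := norm_pos_iff.2 fun h => hrow (congr_fun h _)
  refine ⟨‖ξ‖ * ‖γ‖ / ‖γ (Fin.last m)‖, by positivity, fun ω ⟨hind, hω⟩ => ?_⟩
  exact supNorm_gact_le (linfty_opNorm_mulVec γ ω) (hγF _) hrow hξ hω (minUnimodular_pos hball hind)

/-- For every `γ ∈ GL_r(F_∞)` there exists `c₂ > 0` such that for every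
`ω ∈ Ω^r`:  `|γ(ω)| ≤ c₂·h(ω)⁻¹`. -/
theorem statement6
    (p k q : ℕ) (hp : p.Prime) (hqpk : q = p ^ k) (hk : 0 < k)
    {K : Type*} [NormedField K] [CompleteSpace K] [IsAlgClosed K] [IsUltrametricDist K]
    [CharP K p]
    (t : K) (ht : ‖t‖ = (q : ℝ))
    (Fq : Subfield K) (hFq : (Fq : Set K) = {x : K | x ^ q = x})
    (F : Subfield K) (hF : F = Subfield.closure ((Fq : Set K) ∪ {t}))
    (A : Subring K) (hA : A = Subring.closure ((Fq : Set K) ∪ {t}))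
    (Finf : Subfield K) (hFinf : (Finf : Set K) = closure (F : Set K))
    (ξ : K) (hξ : ξ ≠ 0)
    (m : ℕ) (γ : Matrix (Fin (m + 1)) (Fin (m + 1)) K)
    (hγF : ∀ i j, γ i j ∈ Finf) (hγdet : γ.det ≠ 0) :
    ∃ c₂ : ℝ, 0 < c₂ ∧ ∀ ω ∈ Omega Finf ξ m,
      supNorm (gact ξ γ ω) ≤ c₂ * (hOm Finf ω)⁻¹ :=
  statement6_general p k q hp hqpk hk t ht Fq hFq F hF Finf hFinf ξ hξ m γ hγF hγdet

end Paper
end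
end

section
/- For every ω' ∈ Ω^{r−1} and every ω₁ ∈ C_∞ one has |e_{Λ'ω'}(ω₁)| ≥ d(ω₁, F_∞^{r−1}ω'). -/
/-!
Let `d` be the distance from `z` to `H`. In an ultrametric field `‖1 - z/h‖ = ‖z - h‖/‖h‖`, and
this is `< 1` only when `‖h‖ = ‖z‖` and `‖z - h‖ < ‖z‖`. Among the finitely many such `h` in a
partial product, fix `h₀` closest to `z`. Every other such `h` can be matched with `h - h₀ ∈ H`,
whose factor is `‖z‖/‖h - h₀‖ > 1`, and the two factors together give
`‖z - h‖/‖h - h₀‖ ≥ 1`. So arbitrarily large partial products of `e_H(z)` have norm at least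
`‖z‖ · ‖z - h₀‖/‖z‖ ≥ d`, and passing to the limit gives the same bound for `e_H(z)`. Since
`Λ'ω' ⊆ F_∞^{r-1}ω'`, the distance to `F_∞^{r-1}ω'` is at most `d`.
-/

noncomputable section

namespace Paper

/-- A subgroup `H` of `(K,+)` is strongly discrete if its intersection with every ball of
finite radius is finite. -/
def StronglyDiscrete {K : Type*} [NormedField K] (H : AddSubgroup K) : Prop :=
  ∀ ρ : ℝ, 0 < ρ → {z : K | z ∈ H ∧ ‖z‖ ≤ ρ}.Finite

/-- The exponential function `e_H(z) = z·∏_{h ∈ H∖{0}} (1 − z/h)` associated to a strongly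
discrete subgroup `H ⊂ K`. -/
noncomputable def eH {K : Type*} [NormedField K] (H : AddSubgroup K) (z : K) : K :=
  z * ∏' h : {x : K // x ∈ H ∧ x ≠ 0}, (1 - z / h.1)

/-- The additive homomorphism `λ' ↦ λ'ω' = ∑ i, λ'_i ω'_i` (matrix product of a row vector
with a column vector).  `Λ'ω'` is its image `Λ'.map (pairHom ω')`. -/
def pairHom {K : Type*} [NormedField K] {m : ℕ} (ω' : Fin m → K) : (Fin m → K) →+ K where
  toFun lam := ∑ i, lam i * ω' i
  map_zero' := by simp
  map_add' x y := by simp [add_mul, Finset.sum_add_distrib]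

/-- `F_∞^{m}ω' = {xω' : x ∈ F_∞^m} ⊂ K`. -/
def Fspan {K : Type*} [NormedField K] (Finf : Subfield K) {m : ℕ} (ω' : Fin m → K) : Set K :=
  {z | ∃ c : Fin m → K, (∀ i, c i ∈ Finf) ∧ z = ∑ i, c i * ω' i}

/-- `A^m ⊂ K^m`, the additive group of vectors with entries in `A`. -/
def Avec {K : Type*} [NormedField K] (A : Subring K) (m : ℕ) : AddSubgroup (Fin m → K) where
  carrier := {v | ∀ i, v i ∈ A}
  zero_mem' := by intro i; exact A.zero_mem
  add_mem' := by intro a b ha hb i; exact A.add_mem (ha i) (hb i)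
  neg_mem' := by intro a ha i; exact A.neg_mem (ha i)

lemma infDist_le_norm_sub {E : Type*} [SeminormedAddCommGroup E] {s : Set E} (x : E) {y : E}
    (hy : y ∈ s) : Metric.infDist x s ≤ ‖x - y‖ :=
  dist_eq_norm x y ▸ Metric.infDist_le_dist_of_mem hy

section Ultrametric

variable {E : Type*} [SeminormedAddCommGroup E] [IsUltrametricDist E]

lemma norm_sub_eq_left_of_norm_lt {x y : E} (h : ‖y‖ < ‖x‖) : ‖x - y‖ = ‖x‖ := by
  rw [sub_eq_add_neg, IsUltrametricDist.norm_add_eq_max_of_norm_ne_norm (norm_neg y ▸ h.ne'),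
    norm_neg, max_eq_left h.le]

lemma norm_eq_of_norm_sub_lt {x y : E} (h : ‖x - y‖ < ‖y‖) : ‖y‖ = ‖x‖ := by
  rw [← norm_sub_eq_left_of_norm_lt (norm_sub_rev x y ▸ h), sub_sub_cancel]

end Ultrametric

open Finset in
lemma one_le_prod_of_pairing {ι : Type*} [DecidableEq ι] {T P : Finset ι} {a : ι → ℝ}
    {g : ι → ι} (hPT : P ⊆ T) (hg : Set.InjOn g P) (hgP : ∀ i ∈ P, g i ∈ T \ P)
    (hpair : ∀ i ∈ P, 1 ≤ a i * a (g i)) (hrest : ∀ i ∈ T, i ∉ P → i ∉ P.image g → 1 ≤ a i) :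
    1 ≤ ∏ i ∈ T, a i := by
  have hgPT : P.image g ⊆ T \ P := image_subset_iff.2 hgP
  rw [← prod_sdiff hPT, ← prod_sdiff hgPT, prod_image hg, mul_assoc, ← prod_mul_distrib]
  refine one_le_mul_of_one_le_of_one_le (one_le_prod fun i hi => ?_)
    (one_le_prod fun i hi => mul_comm (a i) _ ▸ hpair i hi)
  simp only [mem_sdiff] at hi
  exact hrest i hi.1.1 hi.1.2 hi.2

lemma norm_one_sub_div {K : Type*} [NormedField K] (z : K) {h : K} (hh : h ≠ 0) :
    ‖1 - z / h‖ = ‖z - h‖ / ‖h‖ := by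
  rw [← div_self hh, ← sub_div, norm_div, norm_sub_rev]

section Exponential

variable {K : Type*} [NormedField K] [IsUltrametricDist K]

lemma one_lt_norm_one_sub_div_sub_and_one_le_mul {z h h₀ : K} (hh : ‖z - h‖ < ‖h‖)
    (hmin : ‖z - h₀‖ ≤ ‖z - h‖) (hne : h ≠ h₀) :
    1 < ‖1 - z / (h - h₀)‖ ∧ 1 ≤ ‖1 - z / h‖ * ‖1 - z / (h - h₀)‖ := by
  have hhz : ‖h‖ = ‖z‖ := norm_eq_of_norm_sub_lt hh
  have hsub_le : ‖h - h₀‖ ≤ ‖z - h‖ := by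
    rw [← sub_add_sub_cancel h z h₀]
    exact (IsUltrametricDist.norm_add_le_max _ _).trans (max_le (norm_sub_rev h z).le hmin)
  have hsub_pos : 0 < ‖h - h₀‖ := norm_pos_iff.2 (sub_ne_zero.2 hne)
  have hsub_lt : ‖h - h₀‖ < ‖z‖ := hsub_le.trans_lt (hhz ▸ hh)
  have hz : 0 < ‖z‖ := hsub_pos.trans hsub_lt
  have hh0 : h ≠ 0 := norm_pos_iff.1 (hhz.symm ▸ hz)
  rw [norm_one_sub_div z (sub_ne_zero.2 hne), norm_one_sub_div z hh0,
    norm_sub_eq_left_of_norm_lt hsub_lt, hhz, div_mul_div_cancel₀ hz.ne']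
  exact ⟨(one_lt_div hsub_pos).2 hsub_lt, (one_le_div hsub_pos).2 hsub_le⟩


open Classical Finset in
lemma exists_superset_one_le_prod_erase {H : AddSubgroup K} {z : K}
    {s₀ : Finset {x : K // x ∈ H ∧ x ≠ 0}} {h₀ : {x : K // x ∈ H ∧ x ≠ 0}}
    (hh₀ : ‖1 - z / h₀.1‖ < 1)
    (hmin : ∀ h ∈ s₀, ‖1 - z / h.1‖ < 1 → ‖z - h₀.1‖ ≤ ‖z - h.1‖) :
    ∃ s ⊇ s₀, 1 ≤ ∏ h ∈ s.erase h₀, ‖1 - z / h.1‖ := by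
  let g (h : {x : K // x ∈ H ∧ x ≠ 0}) : {x : K // x ∈ H ∧ x ≠ 0} :=
    if hg : h.1 - h₀.1 ∈ H ∧ h.1 - h₀.1 ≠ 0 then ⟨_, hg⟩ else h
  have hg {h} (hne : h ≠ h₀) : (g h).1 = h.1 - h₀.1 := by
    have hg : h.1 - h₀.1 ∈ H ∧ h.1 - h₀.1 ≠ 0 :=
      ⟨H.sub_mem h.2.1 h₀.2.1, sub_ne_zero.2 (Subtype.coe_injective.ne hne)⟩
    simp only [g, dif_pos hg]
  set P := (s₀.filter fun h => ‖1 - z / h.1‖ < 1).erase h₀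
  have hgP {h} (hP : h ∈ P) :
      1 < ‖1 - z / (g h).1‖ ∧ 1 ≤ ‖1 - z / h.1‖ * ‖1 - z / (g h).1‖ := by
    obtain ⟨hne, hhs₀, hlt⟩ := by simpa only [P, mem_erase, mem_filter] using hP
    have hmin := hmin h hhs₀ hlt
    rw [norm_one_sub_div z h.2.2, div_lt_one (norm_pos_iff.2 h.2.2)] at hlt
    rw [hg hne]
    exact one_lt_norm_one_sub_div_sub_and_one_le_mul hlt hmin (Subtype.coe_injective.ne hne)
  have hgP_notMem {h} (hP : h ∈ P) : g h ∉ P ∧ g h ≠ h₀ := by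
    have : ¬ ‖1 - z / (g h).1‖ < 1 := (hgP hP).1.not_gt
    exact ⟨fun hgh => this (mem_filter.1 (mem_of_mem_erase hgh)).2, fun hgh => this (hgh ▸ hh₀)⟩
  refine ⟨s₀ ∪ P.image g, subset_union_left, one_le_prod_of_pairing (P := P) (fun h hP => ?_)
    (fun h hP h' hP' heq => ?_) (fun h hP => ?_) (fun h hP => (hgP hP).2) (fun h hT hP himg => ?_)⟩
  · obtain ⟨hne, hhP⟩ := mem_erase.1 hP
    exact mem_erase.2 ⟨hne, mem_union_left _ (mem_filter.1 hhP).1⟩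
  · have := congrArg Subtype.val heq
    rw [hg (mem_erase.1 hP).1, hg (mem_erase.1 hP').1, sub_left_inj] at this
    exact Subtype.ext this
  · exact mem_sdiff.2 ⟨mem_erase.2 ⟨(hgP_notMem hP).2, mem_union_right _ (mem_image_of_mem g hP)⟩,
      (hgP_notMem hP).1⟩
  · obtain ⟨hne, hT⟩ := mem_erase.1 hT
    have hs₀ : h ∈ s₀ := (mem_union.1 hT).resolve_right himg
    exact not_lt.1 fun hlt => hP (mem_erase.2 ⟨hne, mem_filter.2 ⟨hs₀, hlt⟩⟩)

open Finset in
lemma exists_superset_infDist_le_norm_mul_prod (H : AddSubgroup K) (z : K)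
    (s₀ : Finset {x : K // x ∈ H ∧ x ≠ 0}) :
    ∃ s ⊇ s₀, Metric.infDist z H ≤ ‖z‖ * ∏ h ∈ s, ‖1 - z / h.1‖ := by
  classical
  have hdz : Metric.infDist z H ≤ ‖z‖ := by simpa using infDist_le_norm_sub z H.zero_mem
  set B := s₀.filter fun h => ‖1 - z / h.1‖ < 1
  rcases B.eq_empty_or_nonempty with hB | hB
  · refine ⟨s₀, subset_rfl, hdz.trans (le_mul_of_one_le_right (norm_nonneg z) ?_)⟩
    exact one_le_prod fun h hh => not_lt.1 fun hlt => filter_eq_empty_iff.1 hB hh hlt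
  obtain ⟨h₀, h₀B, hmin⟩ := B.exists_min_image (fun h => ‖z - h.1‖) hB
  obtain ⟨h₀s₀, hh₀lt⟩ := mem_filter.1 h₀B
  obtain ⟨s, hs₀s, hprod⟩ := exists_superset_one_le_prod_erase hh₀lt
    fun h hs₀ hlt => hmin h (mem_filter.2 ⟨hs₀, hlt⟩)
  refine ⟨s, hs₀s, ?_⟩
  rw [norm_one_sub_div z h₀.2.2, div_lt_one (norm_pos_iff.2 h₀.2.2)] at hh₀lt
  have hh₀ : ‖h₀.1‖ = ‖z‖ := norm_eq_of_norm_sub_lt hh₀lt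
  calc Metric.infDist z H ≤ ‖z - h₀.1‖ := infDist_le_norm_sub z h₀.2.1
    _ = ‖z‖ * ‖1 - z / h₀.1‖ := by
      rw [norm_one_sub_div z h₀.2.2, hh₀, mul_div_cancel₀ _ (hh₀ ▸ norm_ne_zero_iff.2 h₀.2.2)]
    _ ≤ ‖z‖ * (‖1 - z / h₀.1‖ * ∏ h ∈ s.erase h₀, ‖1 - z / h.1‖) := by
      gcongr
      exact le_mul_of_one_le_right (norm_nonneg _) hprod
    _ = ‖z‖ * ∏ h ∈ s, ‖1 - z / h.1‖ := by
      rw [mul_prod_erase _ (fun h => ‖1 - z / h.1‖) (hs₀s h₀s₀)]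

open Filter in
lemma infDist_le_norm_eH (H : AddSubgroup K) (z : K) : Metric.infDist z H ≤ ‖eH H z‖ := by
  rw [eH, norm_mul]
  by_cases hmul : Multipliable fun h : {x : K // x ∈ H ∧ x ≠ 0} => 1 - z / h.1
  · have hfreq : ∃ᶠ s : Finset {x : K // x ∈ H ∧ x ≠ 0} in atTop,
        ∏ h ∈ s, (1 - z / h.1) ∈ {p : K | Metric.infDist z H ≤ ‖z‖ * ‖p‖} :=
      frequently_atTop.2 fun s₀ => by
        simpa only [Set.mem_ofPred_eq, norm_prod] using
          exists_superset_infDist_le_norm_mul_prod H z s₀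
    exact (isClosed_le continuous_const (continuous_const.mul continuous_norm))
      |>.mem_of_frequently_of_tendsto hfreq hmul.hasProd
  · rw [tprod_eq_one_of_not_multipliable hmul, norm_one, mul_one]
    simpa using infDist_le_norm_sub z H.zero_mem

end Exponential

lemma map_pairHom_subset_Fspan {K : Type*} [NormedField K] {Finf : Subfield K} {m : ℕ}
    {Λ : AddSubgroup (Fin m → K)} (hΛ : ∀ lam ∈ Λ, ∀ i, lam i ∈ Finf) (ω : Fin m → K) :
    (Λ.map (pairHom ω) : Set K) ⊆ Fspan Finf ω := by
  rintro _ ⟨lam, hlam, rfl⟩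
  exact ⟨lam, hΛ lam hlam, rfl⟩

theorem statement10_general
    {K : Type*} [NormedField K] [IsUltrametricDist K]
    (F : Subfield K)
    (Finf : Subfield K) (hFinf : (Finf : Set K) = closure (F : Set K))
    (ξ : K)
    (s : ℕ) (Λ' : AddSubgroup (Fin (s + 1) → K))
    (hΛ'F : ∀ lam ∈ Λ', ∀ i, lam i ∈ F)
    : ∀ ω' ∈ Omega Finf ξ s, ∀ ω₁ : K,
      Metric.infDist ω₁ (Fspan Finf ω') ≤ ‖eH (Λ'.map (pairHom ω')) ω₁‖ := by
  intro ω' _ ω₁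
  have hΛ'Finf : ∀ lam ∈ Λ', ∀ i, lam i ∈ Finf := fun lam hlam i => by
    rw [← SetLike.mem_coe, hFinf]
    exact subset_closure (hΛ'F lam hlam i)
  calc Metric.infDist ω₁ (Fspan Finf ω')
      ≤ Metric.infDist ω₁ (Λ'.map (pairHom ω')) :=
        Metric.infDist_le_infDist_of_subset (map_pairHom_subset_Fspan hΛ'Finf ω') ⟨0, zero_mem _⟩
    _ ≤ ‖eH (Λ'.map (pairHom ω')) ω₁‖ := infDist_le_norm_eH _ ω₁

/-- (Proposition 4.3(d).)  For every `ω' ∈ Ω^{r−1}` and every `ω₁ ∈ C_∞`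
one has `|e_{Λ'ω'}(ω₁)| ≥ d(ω₁, F_∞^{r−1}ω')`. -/
theorem statement10
    (p k q : ℕ) (hp : p.Prime) (hqpk : q = p ^ k) (hk : 0 < k)
    {K : Type*} [NormedField K] [CompleteSpace K] [IsAlgClosed K] [IsUltrametricDist K]
    [CharP K p]
    (t : K) (ht : ‖t‖ = (q : ℝ))
    (Fq : Subfield K) (hFq : (Fq : Set K) = {x : K | x ^ q = x})
    (F : Subfield K) (hF : F = Subfield.closure ((Fq : Set K) ∪ {t}))
    (A : Subring K) (hA : A = Subring.closure ((Fq : Set K) ∪ {t}))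
    (Finf : Subfield K) (hFinf : (Finf : Set K) = closure (F : Set K))
    (ξ : K) (hξ : ξ ≠ 0)
    (s : ℕ) (Λ' : AddSubgroup (Fin (s + 1) → K))
    (hΛ'F : ∀ lam ∈ Λ', ∀ i, lam i ∈ F)
    (hco1 : (Λ' ⊓ Avec A (s + 1)).relIndex Λ' ≠ 0)
    (hco2 : (Λ' ⊓ Avec A (s + 1)).relIndex (Avec A (s + 1)) ≠ 0)
    : ∀ ω' ∈ Omega Finf ξ s, ∀ ω₁ : K,
      Metric.infDist ω₁ (Fspan Finf ω') ≤ ‖eH (Λ'.map (pairHom ω')) ω₁‖ :=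
  statement10_general F Finf hFinf ξ s Λ' hΛ'F

end Paper
end
end
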